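/- arXiv:1904.11982 — 12 statements merged into one kernel-verified Lean document; each statement's English description precedes it below -/
import Mathlib

section
/- Let R be an associative ring with identity and let a, b, c, d ∈ R satisfy b*d*b = b*a*c and d*b*d = a*c*d. If a*c is quasinilpotent, then b*d is quasinilpotent. -/
/-- An element `a` of a ring is quasinilpotent if `1 + a*x` is a unit
for every `x` commuting with `a`. -/
def Quasinilpotent {R : Type*} [Ring R] (a : R) : Prop :=
  ∀ x : R, a * x = x * a → IsUnit (1 + a * x)

/-- Jacobson's lemma (additive form). -/
lemma isUnit_one_add_swap {R : Type*} [Ring R] {p q : R}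
    (h : IsUnit (1 + p * q)) : IsUnit (1 + q * p) := by
  obtain ⟨u, hu⟩ := h
  refine isUnit_iff_exists.2 ⟨1 - q * ↑u⁻¹ * p, ?_, ?_⟩
  · have h1 : (1 + p * q) * ↑u⁻¹ = 1 := by rw [← hu]; exact u.mul_inv
    have h2 : ↑u⁻¹ * (1 + p * q) = 1 := by rw [← hu]; exact u.inv_mul
    calc (1 + q * p) * (1 - q * ↑u⁻¹ * p)
        = 1 + q * p - q * ((1 + p * q) * ↑u⁻¹) * p := by noncomm_ring
      _ = 1 := by rw [h1]; noncomm_ring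
  · have h2 : ↑u⁻¹ * (1 + p * q) = 1 := by rw [← hu]; exact u.inv_mul
    calc (1 - q * ↑u⁻¹ * p) * (1 + q * p)
        = 1 + q * p - q * (↑u⁻¹ * (1 + p * q)) * p := by noncomm_ring
      _ = 1 := by rw [h2]; noncomm_ring

theorem quasinilpotent_bd_of_quasinilpotent_ac {R : Type*} [Ring R]
    (a b c d : R) (h1 : b * d * b = b * a * c) (h2 : d * b * d = a * c * d)
    (hac : Quasinilpotent (a * c)) : Quasinilpotent (b * d) := by
  intro x hx
  set s : R := d * x * b with hs
  -- key commutation: (a*c) commutes with d*x*x*b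
  have hcomm : (a * c) * (d * x * x * b) = (d * x * x * b) * (a * c) := by
    calc (a * c) * (d * x * x * b)
        = (a * c * d) * x * x * b := by noncomm_ring
      _ = (d * b * d) * x * x * b := by rw [h2]
      _ = d * (b * d * x) * x * b := by noncomm_ring
      _ = d * (x * (b * d)) * x * b := by rw [hx]
      _ = d * x * (b * d * x) * b := by noncomm_ring
      _ = d * x * (x * (b * d)) * b := by rw [hx]
      _ = d * x * x * (b * d * b) := by noncomm_ring
      _ = d * x * x * (b * a * c) := by rw [h1]
      _ = (d * x * x * b) * (a * c) := by noncomm_ring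
  -- s * s = (a*c) * (d*x*x*b)
  have hss : s * s = (a * c) * (d * x * x * b) := by
    calc s * s = d * (x * (b * d)) * x * b := by rw [hs]; noncomm_ring
      _ = d * (b * d * x) * x * b := by rw [← hx]
      _ = (d * b * d) * x * x * b := by noncomm_ring
      _ = (a * c * d) * x * x * b := by rw [h2]
      _ = (a * c) * (d * x * x * b) := by noncomm_ring
  -- 1 - s*s is a unit
  have hunit : IsUnit (1 - s * s) := by
    have := hac (-(d * x * x * b)) (by
      rw [mul_neg, neg_mul, hcomm])
    rwa [mul_neg, ← sub_eq_add_neg, ← hss] at this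
  obtain ⟨u, hu⟩ := hunit
  -- s commutes with u⁻¹
  have hcs : Commute s ↑u := by
    rw [hu]; exact (Commute.one_right s).sub_right ((Commute.refl s).mul_right (Commute.refl s))
  have hcsi : Commute s ↑u⁻¹ := hcs.units_inv_right
  -- 1 + s is a unit
  have hs_unit : IsUnit (1 + s) := by
    refine isUnit_iff_exists.2 ⟨(1 - s) * ↑u⁻¹, ?_, ?_⟩
    · calc (1 + s) * ((1 - s) * ↑u⁻¹) = (1 - s * s) * ↑u⁻¹ := by noncomm_ring
        _ = ↑u * ↑u⁻¹ := by rw [hu]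
        _ = 1 := u.mul_inv
    · calc (1 - s) * ↑u⁻¹ * (1 + s) = (1 - s) * (↑u⁻¹ * (1 + s)) := by rw [mul_assoc]
        _ = (1 - s) * ((1 + s) * ↑u⁻¹) := by
            rw [mul_add, add_mul, mul_one, one_mul, hcsi.eq]
        _ = (1 - s * s) * ↑u⁻¹ := by noncomm_ring
        _ = ↑u * ↑u⁻¹ := by rw [hu]
        _ = 1 := u.mul_inv
  -- transfer through Jacobson's lemma: 1 + b*d*x = 1 + b*(d*x)
  have : IsUnit (1 + b * (d * x)) := isUnit_one_add_swap (p := d * x) (q := b) hs_unit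
  rwa [← mul_assoc] at this
end

section
/- Let R be an associative ring with identity and let a, b, c, d ∈ R satisfy b*d*b = b*a*c and d*b*d = a*c*d. If a*c has a generalized Drazin inverse h, then b*d has a generalized Drazin inverse, namely b*h^2*d; that is, (b*d)^d = b*((a*c)^d)^2*d. -/
/-- `h` is a generalized Drazin inverse of `a`: `h = h*a*h`, `h` lies in the
double commutant of `a`, and `a - a^2*h` is quasinilpotent. -/
def IsGDrazinInverse {R : Type*} [Ring R] (a h : R) : Prop :=
  h = h * a * h ∧ (∀ y : R, y * a = a * y → h * y = y * h) ∧
    Quasinilpotent (a - a ^ 2 * h)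

/-- If `u` and `v` both commute with `w`, so does `u*v`. -/
lemma comm_mul {R : Type*} [Ring R] {u v w : R}
    (hu : u * w = w * u) (hv : v * w = w * v) : u * v * w = w * (u * v) := by
  calc u * v * w = u * (v * w) := mul_assoc u v w
  _ = u * (w * v) := by rw [hv]
  _ = u * w * v := (mul_assoc u w v).symm
  _ = w * u * v := by rw [hu]
  _ = w * (u * v) := mul_assoc w u v

/-- Jacobson's lemma for units of the form `1 + uv`. -/
lemma jac_swap {R : Type*} [Ring R] {u v : R} (huv : IsUnit (1 + v * u)) :
    IsUnit (1 + u * v) := by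
  obtain ⟨t, ht1, ht2⟩ := isUnit_iff_exists.mp huv
  refine isUnit_iff_exists.mpr ⟨1 - u * t * v, ?_, ?_⟩
  · have : (1 + u * v) * (1 - u * t * v) = 1 + u * (1 - (1 + v * u) * t) * v := by
      noncomm_ring
    rw [this, ht1]; noncomm_ring
  · have : (1 - u * t * v) * (1 + u * v) = 1 + u * (1 - t * (1 + v * u)) * v := by
      noncomm_ring
    rw [this, ht2]; noncomm_ring

/-- Transfer of quasinilpotency along intertwining relations. -/
lemma quasi_transfer {R : Type*} [Ring R] {B D w : R}
    (hB : B * D * B = B * w) (hD : D * (B * D) = w * D)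
    (hw : Quasinilpotent w) : Quasinilpotent (B * D) := by
  intro x hx
  have hxx : B * D * (x * x) = x * x * (B * D) := by
    rw [← mul_assoc (B * D) x x, hx, mul_assoc x (B * D) x, hx,
      ← mul_assoc x x (B * D)]
  set z := D * x * B with hzdef
  have hz2 : z * z = w * (D * (x * x) * B) := by
    calc z * z = D * x * (B * D * x) * B := by rw [hzdef]; noncomm_ring
    _ = D * x * (x * (B * D)) * B := by rw [hx]
    _ = D * (B * D * (x * x)) * B := by rw [hxx]; noncomm_ring
    _ = D * (B * D) * (x * x) * B := by noncomm_ring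
    _ = w * D * (x * x) * B := by rw [hD]
    _ = w * (D * (x * x) * B) := by noncomm_ring
  have hz2w : w * (D * (x * x) * B) = (D * (x * x) * B) * w := by
    calc w * (D * (x * x) * B) = w * D * (x * x) * B := by noncomm_ring
    _ = D * (B * D) * (x * x) * B := by rw [hD]
    _ = D * (B * D * (x * x)) * B := by noncomm_ring
    _ = D * (x * x * (B * D)) * B := by rw [hxx]
    _ = D * (x * x) * (B * D * B) := by noncomm_ring
    _ = D * (x * x) * (B * w) := by rw [hB]
    _ = (D * (x * x) * B) * w := by noncomm_ring
  have hu : IsUnit (1 - z * z) := by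
    have := hw (-(D * (x * x) * B)) (by rw [mul_neg, neg_mul, hz2w])
    rwa [mul_neg, ← sub_eq_add_neg, ← hz2] at this
  obtain ⟨t, ht1, ht2⟩ := isUnit_iff_exists.mp hu
  have hz : IsUnit (1 + z) := by
    refine isUnit_iff_exists.mpr ⟨(1 - z) * t, ?_, ?_⟩
    · calc (1 + z) * ((1 - z) * t) = (1 - z * z) * t := by noncomm_ring
      _ = 1 := ht1
    · have htc : t * (1 + z) = (1 + z) * t := by
        calc t * (1 + z) = t * (1 + z) * ((1 - z * z) * t) := by rw [ht1, mul_one]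
        _ = (t * (1 - z * z)) * ((1 + z) * t) := by noncomm_ring
        _ = (1 + z) * t := by rw [ht2, one_mul]
      calc (1 - z) * t * (1 + z) = (1 - z) * (t * (1 + z)) := by rw [mul_assoc]
      _ = (1 - z) * ((1 + z) * t) := by rw [htc]
      _ = (1 - z * z) * t := by noncomm_ring
      _ = 1 := ht1
  have hj := jac_swap (u := B) (v := D * x)
    (by rw [show D * x * B = z from rfl] at *; exact hz)
  have he : 1 + B * (D * x) = 1 + B * D * x := by noncomm_ring
  rwa [he] at hj

theorem gdrazin_bd_of_gdrazin_ac {R : Type*} [Ring R]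
    (a b c d h : R) (h1 : b * d * b = b * a * c) (h2 : d * b * d = a * c * d)
    (hac : IsGDrazinInverse (a * c) h) :
    IsGDrazinInverse (b * d) (b * h ^ 2 * d) := by
  obtain ⟨hh, hcm, hqn⟩ := hac
  -- h commutes with a*c
  have hp : h * (a * c) = (a * c) * h := hcm (a * c) rfl
  -- d*b commutes with a*c
  have f3 : d * b * (a * c) = (a * c) * (d * b) := by
    calc d * b * (a * c) = d * (b * a * c) := by noncomm_ring
    _ = d * (b * d * b) := by rw [h1]
    _ = (d * b * d) * b := by noncomm_ring
    _ = (a * c * d) * b := by rw [h2]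
    _ = (a * c) * (d * b) := by noncomm_ring
  -- hence h commutes with d*b
  have hdb : h * (d * b) = (d * b) * h := hcm (d * b) f3
  have hdb2 : h * h * (d * b) = (d * b) * (h * h) := comm_mul hdb hdb
  have hdb4 : (h * h) * (h * h) * (d * b) = (d * b) * ((h * h) * (h * h)) :=
    comm_mul hdb2 hdb2
  have hc2 : h * h * (a * c) = (a * c) * (h * h) := comm_mul hp hp
  -- h*h*(a*c) = h
  have hph2 : h * h * (a * c) = h := by
    calc h * h * (a * c) = h * (h * (a * c)) := mul_assoc h h (a * c)
    _ = h * ((a * c) * h) := by rw [hp]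
    _ = h * (a * c) * h := (mul_assoc h (a * c) h).symm
    _ = h := hh.symm
  -- h*h = (h*h)*(h*h)*((a*c)*(a*c))
  have L1 : h * h = h * h * (h * h) * ((a * c) * (a * c)) := by
    calc h * h = (h * h * (a * c)) * (h * h * (a * c)) := by rw [hph2]
    _ = h * h * ((a * c) * (h * h)) * (a * c) := by noncomm_ring
    _ = h * h * (h * h * (a * c)) * (a * c) := by rw [← hc2]
    _ = h * h * (h * h) * ((a * c) * (a * c)) := by noncomm_ring
  refine ⟨?_, ?_, ?_⟩
  · -- e = e * (b*d) * e
    simp only [pow_two]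
    symm
    calc b * (h * h) * d * (b * d) * (b * (h * h) * d)
        = b * (h * h) * (d * b * d) * (b * (h * h * d)) := by noncomm_ring
    _ = b * (h * h) * (a * c * d) * (b * (h * h * d)) := by rw [h2]
    _ = b * (h * h * (a * c)) * (d * b * (h * h * d)) := by noncomm_ring
    _ = b * h * (d * b * (h * h * d)) := by rw [hph2]
    _ = b * h * ((d * b) * (h * h) * d) := by noncomm_ring
    _ = b * h * (h * h * (d * b) * d) := by rw [← hdb2]
    _ = b * (h * (h * h)) * (d * b * d) := by noncomm_ring
    _ = b * (h * (h * h)) * (a * c * d) := by rw [h2]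
    _ = b * (h * (h * h * (a * c))) * d := by noncomm_ring
    _ = b * (h * h) * d := by rw [hph2]
  · -- double commutant property
    intro y hy
    simp only [pow_two]
    have zp : d * y * b * (a * c) = (a * c) * (d * y * b) := by
      calc d * y * b * (a * c) = d * y * (b * a * c) := by noncomm_ring
      _ = d * y * (b * d * b) := by rw [h1]
      _ = d * (y * (b * d)) * b := by noncomm_ring
      _ = d * (b * d * y) * b := by rw [hy]
      _ = (d * b * d) * (y * b) := by noncomm_ring
      _ = (a * c * d) * (y * b) := by rw [h2]
      _ = (a * c) * (d * y * b) := by noncomm_ring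
    have hz : h * (d * y * b) = (d * y * b) * h := hcm (d * y * b) zp
    have hz2 : h * h * (d * y * b) = (d * y * b) * (h * h) := comm_mul hz hz
    have hz4 : (h * h) * (h * h) * (d * y * b) = (d * y * b) * ((h * h) * (h * h)) :=
      comm_mul hz2 hz2
    have hyy : (b * d) * ((b * d) * y) = y * ((b * d) * (b * d)) := by
      calc (b * d) * ((b * d) * y) = (b * d) * (y * (b * d)) := by rw [hy]
      _ = ((b * d) * y) * (b * d) := (mul_assoc _ _ _).symm
      _ = (y * (b * d)) * (b * d) := by rw [hy]
      _ = y * ((b * d) * (b * d)) := mul_assoc _ _ _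
    calc b * (h * h) * d * y
        = b * (h * h * (h * h) * ((a * c) * (a * c))) * d * y := by rw [← L1]
    _ = b * ((h * h) * (h * h)) * ((a * c) * ((a * c) * d)) * y := by noncomm_ring
    _ = b * ((h * h) * (h * h)) * ((a * c) * (d * b * d)) * y := by rw [← h2]
    _ = b * ((h * h) * (h * h)) * (((a * c) * d) * (b * d)) * y := by noncomm_ring
    _ = b * ((h * h) * (h * h)) * ((d * b * d) * (b * d)) * y := by rw [← h2]
    _ = b * ((h * h) * (h * h)) * d * ((b * d) * ((b * d) * y)) := by noncomm_ring
    _ = b * ((h * h) * (h * h)) * d * (y * ((b * d) * (b * d))) := by rw [hyy]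
    _ = b * ((h * h) * (h * h) * (d * y * b)) * (d * (b * d)) := by noncomm_ring
    _ = b * ((d * y * b) * ((h * h) * (h * h))) * (d * (b * d)) := by rw [hz4]
    _ = (b * d) * y * (b * ((h * h) * (h * h)) * (d * (b * d))) := by noncomm_ring
    _ = y * (b * d) * (b * ((h * h) * (h * h)) * (d * (b * d))) := by rw [← hy]
    _ = y * (b * ((d * b) * ((h * h) * (h * h))) * (d * (b * d))) := by noncomm_ring
    _ = y * (b * ((h * h) * (h * h) * (d * b)) * (d * (b * d))) := by rw [← hdb4]
    _ = y * (b * ((h * h) * (h * h)) * ((d * b * d) * (b * d))) := by noncomm_ring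
    _ = y * (b * ((h * h) * (h * h)) * ((a * c * d) * (b * d))) := by rw [h2]
    _ = y * (b * ((h * h) * (h * h)) * ((a * c) * (d * b * d))) := by noncomm_ring
    _ = y * (b * ((h * h) * (h * h)) * ((a * c) * (a * c * d))) := by rw [h2]
    _ = y * (b * (h * h * (h * h) * ((a * c) * (a * c))) * d) := by noncomm_ring
    _ = y * (b * (h * h) * d) := by rw [← L1]
  · -- quasinilpotency
    have m : (b * d) ^ 2 * (b * h ^ 2 * d) = b * ((a * c) * h) * d := by
      calc (b * d) ^ 2 * (b * h ^ 2 * d)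
          = b * (d * b * d) * (b * (h * h * d)) := by noncomm_ring
      _ = b * (a * c * d) * (b * (h * h * d)) := by rw [h2]
      _ = b * (a * c) * ((d * b) * (h * h)) * d := by noncomm_ring
      _ = b * (a * c) * (h * h * (d * b)) * d := by rw [hdb2]
      _ = b * (a * c) * (h * h) * (d * b * d) := by noncomm_ring
      _ = b * (a * c) * (h * h) * (a * c * d) := by rw [h2]
      _ = b * ((a * c) * (h * h * (a * c))) * d := by noncomm_ring
      _ = b * ((a * c) * h) * d := by rw [hph2]
    have key : b * d - (b * d) ^ 2 * (b * h ^ 2 * d)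
        = (b - b * ((a * c) * h)) * d := by
      rw [m]; noncomm_ring
    rw [key]
    have q1 : b * d * b = b * (a * c) := by rw [h1, mul_assoc]
    have q3 : b * ((a * c) * h) * (d * b) = b * ((a * c) * h) * (a * c) := by
      calc b * ((a * c) * h) * (d * b)
          = b * (a * c) * (h * (d * b)) := by noncomm_ring
      _ = b * (a * c) * ((d * b) * h) := by rw [hdb]
      _ = b * ((a * c) * (d * b)) * h := by noncomm_ring
      _ = b * (d * b * (a * c)) * h := by rw [← f3]
      _ = (b * d * b) * ((a * c) * h) := by noncomm_ring
      _ = (b * a * c) * ((a * c) * h) := by rw [h1]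
      _ = (b * a * c) * (h * (a * c)) := by rw [← hp]
      _ = b * ((a * c) * h) * (a * c) := by noncomm_ring
    have q4 : b * ((a * c) * h) * (d * (b * ((a * c) * h)))
        = b * ((a * c) * h) * ((a * c) ^ 2 * h) := by
      calc b * ((a * c) * h) * (d * (b * ((a * c) * h)))
          = b * (a * c) * (h * (d * b)) * ((a * c) * h) := by noncomm_ring
      _ = b * (a * c) * ((d * b) * h) * ((a * c) * h) := by rw [hdb]
      _ = b * ((a * c) * (d * b)) * (h * (a * c)) * h := by noncomm_ring
      _ = b * ((a * c) * (d * b)) * ((a * c) * h) * h := by rw [hp]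
      _ = b * ((d * b) * (a * c)) * ((a * c) * h) * h := by rw [← f3]
      _ = (b * d * b) * ((a * c) * ((a * c) * h)) * h := by noncomm_ring
      _ = (b * a * c) * ((a * c) * ((a * c) * h)) * h := by rw [h1]
      _ = b * (a * c) * ((a * c) * ((a * c) * h)) * h := by noncomm_ring
      _ = b * (a * c) * ((a * c) * (h * (a * c))) * h := by rw [hp]
      _ = b * (a * c) * (((a * c) * h) * (a * c)) * h := by noncomm_ring
      _ = b * (a * c) * ((h * (a * c)) * (a * c)) * h := by rw [hp]
      _ = b * ((a * c) * h) * ((a * c) ^ 2 * h) := by noncomm_ring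
    have hB : (b - b * ((a * c) * h)) * d * (b - b * ((a * c) * h))
        = (b - b * ((a * c) * h)) * ((a * c) - (a * c) ^ 2 * h) := by
      calc (b - b * ((a * c) * h)) * d * (b - b * ((a * c) * h))
          = (b * d * b) - (b * d * b) * ((a * c) * h)
            - b * ((a * c) * h) * (d * b)
            + b * ((a * c) * h) * (d * (b * ((a * c) * h))) := by noncomm_ring
      _ = (b * (a * c)) - (b * (a * c)) * ((a * c) * h)
            - b * ((a * c) * h) * (a * c)
            + b * ((a * c) * h) * ((a * c) ^ 2 * h) := by rw [q1, q3, q4]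
      _ = (b - b * ((a * c) * h)) * ((a * c) - (a * c) ^ 2 * h) := by noncomm_ring
    have m1 : d * (b * d) = (a * c) * d := by rw [← mul_assoc]; exact h2
    have m2 : d * (b * ((a * c) * h) * d) = (a * c) ^ 2 * h * d := by
      calc d * (b * ((a * c) * h) * d)
          = ((d * b) * (a * c)) * (h * d) := by noncomm_ring
      _ = ((a * c) * (d * b)) * (h * d) := by rw [f3]
      _ = (a * c) * ((d * b) * h) * d := by noncomm_ring
      _ = (a * c) * (h * (d * b)) * d := by rw [← hdb]
      _ = (a * c) * h * (d * b * d) := by noncomm_ring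
      _ = (a * c) * h * (a * c * d) := by rw [h2]
      _ = (a * c) * ((h * (a * c)) * d) := by noncomm_ring
      _ = (a * c) * (((a * c) * h) * d) := by rw [hp]
      _ = (a * c) ^ 2 * h * d := by noncomm_ring
    have hD : d * ((b - b * ((a * c) * h)) * d) = ((a * c) - (a * c) ^ 2 * h) * d := by
      calc d * ((b - b * ((a * c) * h)) * d)
          = d * (b * d) - d * (b * ((a * c) * h) * d) := by noncomm_ring
      _ = (a * c) * d - (a * c) ^ 2 * h * d := by rw [m1, m2]
      _ = ((a * c) - (a * c) ^ 2 * h) * d := by noncomm_ring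
    exact quasi_transfer hB hD hqn
end

section
/- Let R be an associative ring with identity and let a, b ∈ R. If a*b has a generalized Drazin inverse, then b*a has a generalized Drazin inverse and (b*a)^d = b*((a*b)^d)^2*a. -/
/-- Jacobson's lemma. -/
lemma jacobson_unit {R : Type*} [Ring R] (a b : R) (hu : IsUnit (1 + a * b)) :
    IsUnit (1 + b * a) := by
  obtain ⟨u, hu⟩ := hu
  have hc1 : (1 + a * b) * ↑u⁻¹ = 1 := by rw [← hu]; exact u.mul_inv
  have hc2 : (↑u⁻¹ : R) * (1 + a * b) = 1 := by rw [← hu]; exact u.inv_mul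
  refine isUnit_iff_exists.mpr ⟨1 - b * ↑u⁻¹ * a, ?_, ?_⟩
  · calc (1 + b * a) * (1 - b * ↑u⁻¹ * a)
        = 1 + b * a - b * ((1 + a * b) * ↑u⁻¹) * a := by noncomm_ring
      _ = 1 := by rw [hc1]; noncomm_ring
  · calc (1 - b * ↑u⁻¹ * a) * (1 + b * a)
        = 1 + b * a - b * (↑u⁻¹ * (1 + a * b)) * a := by noncomm_ring
      _ = 1 := by rw [hc2]; noncomm_ring

/-- Cline's formula for quasinilpotents. -/
lemma qn_cline {R : Type*} [Ring R] (u v : R) (hqn : Quasinilpotent (u * v)) :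
    Quasinilpotent (v * u) := by
  have stepA : ∀ y : R, v * u * y = y * (v * u) → IsUnit (1 + v * u * (v * u * y)) := by
    intro y hy
    have hz : (u * v) * (u * y * v) = (u * y * v) * (u * v) := by
      calc (u * v) * (u * y * v) = u * (v * u * y) * v := by noncomm_ring
        _ = u * (y * (v * u)) * v := by rw [hy]
        _ = (u * y * v) * (u * v) := by noncomm_ring
    have h1 : IsUnit (1 + (u * v) * (u * y * v)) := hqn _ hz
    have h2 : IsUnit (1 + u * (v * (u * y * v))) := by
      have : (1 : R) + (u * v) * (u * y * v) = 1 + u * (v * (u * y * v)) := by noncomm_ring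
      rwa [this] at h1
    have h3 := jacobson_unit u (v * (u * y * v)) h2
    have h4 : (1 : R) + v * u * (v * u * y) = 1 + v * (u * y * v) * u := by
      calc (1 : R) + v * u * (v * u * y) = 1 + v * u * (y * (v * u)) := by rw [hy]
        _ = 1 + v * (u * y * v) * u := by noncomm_ring
    rw [h4]; exact h3
  intro x hx
  have hxx : v * u * (-(x * x)) = (-(x * x)) * (v * u) := by
    calc v * u * (-(x * x)) = -((v * u * x) * x) := by noncomm_ring
      _ = -((x * (v * u)) * x) := by rw [hx]
      _ = -(x * (v * u * x)) := by noncomm_ring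
      _ = -(x * (x * (v * u))) := by rw [hx]
      _ = (-(x * x)) * (v * u) := by noncomm_ring
  obtain ⟨w, hwv⟩ := stepA _ hxx
  have hwt : (w : R) = 1 - (v * u * x) * (v * u * x) := by
    have htt : (v * u * x) * (v * u * x) = v * u * (v * u * (x * x)) := by
      calc (v * u * x) * (v * u * x) = v * u * ((x * (v * u)) * x) := by noncomm_ring
        _ = v * u * ((v * u * x) * x) := by rw [← hx]
        _ = v * u * (v * u * (x * x)) := by noncomm_ring
    rw [htt, hwv]; noncomm_ring
  have ht1 : (1 + v * u * x) * (1 - v * u * x) = ↑w := by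
    rw [hwt]; noncomm_ring
  have ht2 : (1 - v * u * x) * (1 + v * u * x) = ↑w := by
    rw [hwt]; noncomm_ring
  have hci : (↑w⁻¹ : R) * (1 - v * u * x) = (1 - v * u * x) * ↑w⁻¹ := by
    have hcw : Commute (1 - v * u * x) (w : R) := by
      show (1 - v * u * x) * (w : R) = (w : R) * (1 - v * u * x)
      rw [hwt]; noncomm_ring
    exact hcw.units_inv_right.eq.symm
  refine isUnit_iff_exists.mpr ⟨(1 - v * u * x) * ↑w⁻¹, ?_, ?_⟩
  · calc (1 + v * u * x) * ((1 - v * u * x) * ↑w⁻¹)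
        = ((1 + v * u * x) * (1 - v * u * x)) * ↑w⁻¹ := (mul_assoc _ _ _).symm
      _ = ↑w * ↑w⁻¹ := by rw [ht1]
      _ = 1 := w.mul_inv
  · calc ((1 - v * u * x) * ↑w⁻¹) * (1 + v * u * x)
        = (↑w⁻¹ * (1 - v * u * x)) * (1 + v * u * x) := by rw [hci]
      _ = ↑w⁻¹ * ((1 - v * u * x) * (1 + v * u * x)) := mul_assoc _ _ _
      _ = ↑w⁻¹ * ↑w := by rw [ht2]
      _ = 1 := w.inv_mul

/-- Cline's formula for the generalized Drazin inverse. -/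
theorem cline_formula_gdrazin {R : Type*} [Ring R] (a b h : R)
    (hab : IsGDrazinInverse (a * b) h) :
    IsGDrazinInverse (b * a) (b * h ^ 2 * a) := by
  obtain ⟨h1, h2, h3⟩ := hab
  have he : h * (a * b) = (a * b) * h := h2 (a * b) rfl
  have heh : h * (a * b) * h = h := h1.symm
  have heh2 : h ^ 2 * (a * b) = (a * b) * h ^ 2 := by
    calc h ^ 2 * (a * b) = h * (h * (a * b)) := by noncomm_ring
      _ = h * ((a * b) * h) := by rw [he]
      _ = (h * (a * b)) * h := by noncomm_ring
      _ = ((a * b) * h) * h := by rw [he]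
      _ = (a * b) * h ^ 2 := by noncomm_ring
  have key : h ^ 2 * ((a * b) * ((a * b) * h ^ 2)) = h ^ 2 := by
    calc h ^ 2 * ((a * b) * ((a * b) * h ^ 2))
        = h * ((h * (a * b)) * ((a * b) * (h * h))) := by noncomm_ring
      _ = h * (((a * b) * h) * ((a * b) * (h * h))) := by rw [he]
      _ = (h * (a * b)) * ((h * (a * b) * h) * h) := by noncomm_ring
      _ = (h * (a * b)) * (h * h) := by rw [heh]
      _ = (h * (a * b) * h) * h := by noncomm_ring
      _ = h * h := by rw [heh]
      _ = h ^ 2 := by noncomm_ring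
  have hk : b * h ^ 2 * a = b * h ^ 2 * a * (b * a) * (b * h ^ 2 * a) := by
    have hre : b * h ^ 2 * a * (b * a) * (b * h ^ 2 * a)
        = b * (h ^ 2 * ((a * b) * ((a * b) * h ^ 2))) * a := by noncomm_ring
    rw [hre, key]
  refine ⟨hk, ?_, ?_⟩
  · intro y hy
    have hz : (a * y * b) * (a * b) = (a * b) * (a * y * b) := by
      calc (a * y * b) * (a * b) = a * (y * (b * a)) * b := by noncomm_ring
        _ = a * ((b * a) * y) * b := by rw [hy]
        _ = (a * b) * (a * y * b) := by noncomm_ring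
    have hzz : h * (a * y * b) = (a * y * b) * h := h2 _ hz
    have hz2 : h ^ 2 * (a * y * b) = (a * y * b) * h ^ 2 := by
      calc h ^ 2 * (a * y * b) = h * (h * (a * y * b)) := by noncomm_ring
        _ = h * ((a * y * b) * h) := by rw [hzz]
        _ = (h * (a * y * b)) * h := by noncomm_ring
        _ = ((a * y * b) * h) * h := by rw [hzz]
        _ = (a * y * b) * h ^ 2 := by noncomm_ring
    have C1 : b * h ^ 2 * a * y * (b * a) = y * (b * h ^ 2 * a) * (b * a) := by
      calc b * h ^ 2 * a * y * (b * a) = b * (h ^ 2 * (a * y * b)) * a := by noncomm_ring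
        _ = b * ((a * y * b) * h ^ 2) * a := by rw [hz2]
        _ = (b * a) * y * (b * h ^ 2 * a) := by noncomm_ring
        _ = y * (b * a) * (b * h ^ 2 * a) := by rw [← hy]
        _ = y * (b * ((a * b) * h ^ 2) * a) := by noncomm_ring
        _ = y * (b * (h ^ 2 * (a * b)) * a) := by rw [heh2]
        _ = y * (b * h ^ 2 * a) * (b * a) := by noncomm_ring
    have C2 : (b * a) * (b * h ^ 2 * a * y) = (b * a) * (y * (b * h ^ 2 * a)) := by
      calc (b * a) * (b * h ^ 2 * a * y) = b * ((a * b) * h ^ 2) * (a * y) := by noncomm_ring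
        _ = b * (h ^ 2 * (a * b)) * (a * y) := by rw [← heh2]
        _ = b * h ^ 2 * a * ((b * a) * y) := by noncomm_ring
        _ = b * h ^ 2 * a * (y * (b * a)) := by rw [← hy]
        _ = b * h ^ 2 * a * y * (b * a) := by noncomm_ring
        _ = y * (b * h ^ 2 * a) * (b * a) := C1
        _ = y * (b * (h ^ 2 * (a * b)) * a) := by noncomm_ring
        _ = y * (b * ((a * b) * h ^ 2) * a) := by rw [heh2]
        _ = (y * (b * a)) * (b * h ^ 2 * a) := by noncomm_ring
        _ = ((b * a) * y) * (b * h ^ 2 * a) := by rw [hy]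
        _ = (b * a) * (y * (b * h ^ 2 * a)) := by noncomm_ring
    calc b * h ^ 2 * a * y
        = (b * h ^ 2 * a * (b * a) * (b * h ^ 2 * a)) * y := by conv_lhs => rw [hk]
      _ = (b * h ^ 2 * a) * ((b * a) * (b * h ^ 2 * a * y)) := by noncomm_ring
      _ = (b * h ^ 2 * a) * ((b * a) * (y * (b * h ^ 2 * a))) := by rw [C2]
      _ = (b * h ^ 2 * a) * (((b * a) * y) * (b * h ^ 2 * a)) := by noncomm_ring
      _ = (b * h ^ 2 * a) * ((y * (b * a)) * (b * h ^ 2 * a)) := by rw [← hy]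
      _ = (b * h ^ 2 * a * y * (b * a)) * (b * h ^ 2 * a) := by noncomm_ring
      _ = (y * (b * h ^ 2 * a) * (b * a)) * (b * h ^ 2 * a) := by rw [C1]
      _ = y * (b * h ^ 2 * a * (b * a) * (b * h ^ 2 * a)) := by noncomm_ring
      _ = y * (b * h ^ 2 * a) := by rw [← hk]
  · have m4 : (a * b) * ((a * b) * h ^ 2) = (a * b) * h := by
      calc (a * b) * ((a * b) * h ^ 2) = (a * b) * (((a * b) * h) * h) := by noncomm_ring
        _ = (a * b) * ((h * (a * b)) * h) := by rw [← he]
        _ = (a * b) * (h * (a * b) * h) := by noncomm_ring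
        _ = (a * b) * h := by rw [heh]
    have hq : b * a - (b * a) ^ 2 * (b * h ^ 2 * a) = b * (a - (a * b) * (h * a)) := by
      calc b * a - (b * a) ^ 2 * (b * h ^ 2 * a)
          = b * a - b * ((a * b) * ((a * b) * h ^ 2)) * a := by noncomm_ring
        _ = b * a - b * ((a * b) * h) * a := by rw [m4]
        _ = b * (a - (a * b) * (h * a)) := by noncomm_ring
    rw [hq]
    have hp : Quasinilpotent ((a - (a * b) * (h * a)) * b) := by
      have hpe : (a - (a * b) * (h * a)) * b = a * b - (a * b) ^ 2 * h := by
        calc (a - (a * b) * (h * a)) * b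
            = a * b - (a * b) * (h * (a * b)) := by noncomm_ring
          _ = a * b - (a * b) * ((a * b) * h) := by rw [he]
          _ = a * b - (a * b) ^ 2 * h := by noncomm_ring
      rw [hpe]; exact h3
    exact qn_cline _ _ hp
end

section
/- Let R be an associative ring with identity and let a, b, c, d ∈ R satisfy b*d*b = b*a*c and d*b*d = a*c*d. If a*c has a pseudo Drazin inverse, then b*d has a pseudo Drazin inverse, (b*d)^† = b*((a*c)^†)^2*d, and if (a*c)^k - (a*c)^(k+1)*(a*c)^† lies in the Jacobson radical of R then (b*d)^(k+1) - (b*d)^(k+2)*(b*d)^† lies in the Jacobson radical of R (so the p-Drazin index satisfies i(b*d) ≤ i(a*c) + 1). -/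
/-- `b` is a pseudo Drazin inverse of `a`: `b = b*a*b`, `b` lies in the
double commutant of `a`, and `a^k - a^(k+1)*b` lies in the Jacobson radical
for some `k ≥ 1`. -/
def IsPDrazinInverse {R : Type*} [Ring R] (a b : R) : Prop :=
  b = b * a * b ∧ (∀ y : R, y * a = a * y → b * y = y * b) ∧
    ∃ k : ℕ, 1 ≤ k ∧ a ^ k - a ^ (k + 1) * b ∈ Ideal.jacobson (⊥ : Ideal R)

/-- The Jacobson radical of `⊥` is closed under right multiplication. -/
lemma jacobson_bot_mul_right {R : Type*} [Ring R] (x r : R)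
    (hx : x ∈ Ideal.jacobson (⊥ : Ideal R)) :
    x * r ∈ Ideal.jacobson (⊥ : Ideal R) := by
  rw [Ideal.mem_jacobson_iff] at hx ⊢
  intro y
  obtain ⟨z, hz⟩ := hx (r * y)
  rw [Ideal.mem_bot] at hz
  have hz' : z * (r * y) * x = 1 - z := eq_sub_of_add_eq (sub_eq_zero.mp hz)
  refine ⟨1 - y * x * z * r, ?_⟩
  rw [Ideal.mem_bot]
  calc (1 - y * x * z * r) * y * (x * r) + (1 - y * x * z * r) - 1
      = (y * x * r - y * x * z * r) - y * x * (z * (r * y) * x) * r := by noncomm_ring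
    _ = (y * x * r - y * x * z * r) - y * x * (1 - z) * r := by rw [hz']
    _ = 0 := by noncomm_ring

theorem pdrazin_bd_of_pdrazin_ac {R : Type*} [Ring R]
    (a b c d h : R) (h1 : b * d * b = b * a * c) (h2 : d * b * d = a * c * d)
    (hac : IsPDrazinInverse (a * c) h) :
    IsPDrazinInverse (b * d) (b * h ^ 2 * d) ∧
      ∀ k : ℕ, 1 ≤ k →
        (a * c) ^ k - (a * c) ^ (k + 1) * h ∈ Ideal.jacobson (⊥ : Ideal R) →
        (b * d) ^ (k + 1) - (b * d) ^ (k + 2) * (b * h ^ 2 * d) ∈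
          Ideal.jacobson (⊥ : Ideal R) := by
  obtain ⟨hA1, hA2, k0, hk0, hk0J⟩ := hac
  -- h commutes with a*c
  have hAh : h * (a * c) = (a * c) * h := hA2 (a * c) rfl
  -- d*b commutes with a*c
  have hdbA : d * b * (a * c) = (a * c) * (d * b) := by
    calc d * b * (a * c) = d * (b * a * c) := by noncomm_ring
      _ = d * (b * d * b) := by rw [← h1]
      _ = (d * b * d) * b := by noncomm_ring
      _ = (a * c * d) * b := by rw [h2]
      _ = (a * c) * (d * b) := by noncomm_ring
  have hdbh : h * (d * b) = (d * b) * h := hA2 (d * b) hdbA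
  have hdbh4 : (d * b) * h ^ 4 = h ^ 4 * (d * b) :=
    ((Commute.pow_left (hdbh : Commute h (d * b)) 4).eq).symm
  have hdbhh : (d * b) * (h * h) = (h * h) * (d * b) := by
    calc (d * b) * (h * h) = ((d * b) * h) * h := by noncomm_ring
      _ = (h * (d * b)) * h := by rw [hdbh]
      _ = h * ((d * b) * h) := by noncomm_ring
      _ = h * (h * (d * b)) := by rw [hdbh]
      _ = (h * h) * (d * b) := by noncomm_ring
  -- h*h*(a*c) = h and (a*c)*(h*h) = h
  have hh2A : h * h * (a * c) = h := by
    calc h * h * (a * c) = h * (h * (a * c)) := by noncomm_ring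
      _ = h * ((a * c) * h) := by rw [hAh]
      _ = h * (a * c) * h := by noncomm_ring
      _ = h := hA1.symm
  have hAh2 : (a * c) * (h * h) = h := by
    calc (a * c) * (h * h) = ((a * c) * h) * h := by noncomm_ring
      _ = (h * (a * c)) * h := by rw [← hAh]
      _ = h * (a * c) * h := by noncomm_ring
      _ = h := hA1.symm
  have h4AA : (a * c) * h ^ 4 * (a * c) = h * h := by
    calc (a * c) * h ^ 4 * (a * c) = ((a * c) * (h * h)) * (h * h * (a * c)) := by noncomm_ring
      _ = h * (h * h * (a * c)) := by rw [hAh2]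
      _ = h * h := by rw [hh2A]
  -- power formula
  have hpow : ∀ n : ℕ, (b * d) ^ (n + 2) = b * (a * c) ^ (n + 1) * d := by
    intro n
    induction n with
    | zero =>
      calc (b * d) ^ (0 + 2) = (b * d * b) * d := by noncomm_ring
        _ = (b * a * c) * d := by rw [h1]
        _ = b * (a * c) ^ (0 + 1) * d := by noncomm_ring
    | succ n ih =>
      calc (b * d) ^ (n + 1 + 2) = (b * d) ^ (n + 2) * (b * d) := by rw [← pow_succ]
        _ = (b * (a * c) ^ (n + 1) * d) * (b * d) := by rw [ih]
        _ = b * (a * c) ^ (n + 1) * (d * b * d) := by noncomm_ring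
        _ = b * (a * c) ^ (n + 1) * (a * c * d) := by rw [h2]
        _ = b * ((a * c) ^ (n + 1) * (a * c)) * d := by noncomm_ring
        _ = b * (a * c) ^ (n + 1 + 1) * d := by rw [← pow_succ]
  -- the two factorizations of b*h^2*d
  have hgL : b * h ^ 2 * d = b * h ^ 4 * d * (b * d) * (b * d) := by
    symm
    calc b * h ^ 4 * d * (b * d) * (b * d) = b * h ^ 4 * (d * b * d) * (b * d) := by noncomm_ring
      _ = b * h ^ 4 * (a * c * d) * (b * d) := by rw [h2]
      _ = b * h ^ 4 * (a * c) * (d * b * d) := by noncomm_ring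
      _ = b * h ^ 4 * (a * c) * (a * c * d) := by rw [h2]
      _ = b * ((h * h) * (h * h * (a * c)) * (a * c)) * d := by noncomm_ring
      _ = b * ((h * h) * h * (a * c)) * d := by rw [hh2A]
      _ = b * (h * (h * h * (a * c))) * d := by noncomm_ring
      _ = b * (h * h) * d := by rw [hh2A]
      _ = b * h ^ 2 * d := by noncomm_ring
  have hgR : b * h ^ 2 * d = (b * d) * ((b * d) * (b * h ^ 4 * d)) := by
    symm
    calc (b * d) * ((b * d) * (b * h ^ 4 * d)) = b * d * (b * d * b) * (h ^ 4 * d) := by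
          noncomm_ring
      _ = b * d * (b * a * c) * (h ^ 4 * d) := by rw [h1]
      _ = b * (d * b * (a * c)) * (h ^ 4 * d) := by noncomm_ring
      _ = b * ((a * c) * (d * b)) * (h ^ 4 * d) := by rw [hdbA]
      _ = b * (a * c) * ((d * b) * h ^ 4) * d := by noncomm_ring
      _ = b * (a * c) * (h ^ 4 * (d * b)) * d := by rw [hdbh4]
      _ = b * ((a * c) * h ^ 4) * (d * b * d) := by noncomm_ring
      _ = b * ((a * c) * h ^ 4) * (a * c * d) := by rw [h2]
      _ = b * ((a * c) * h ^ 4 * (a * c)) * d := by noncomm_ring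
      _ = b * (h * h) * d := by rw [h4AA]
      _ = b * h ^ 2 * d := by noncomm_ring
  -- the Jacobson radical statement (for all k)
  have main3 : ∀ k : ℕ, 1 ≤ k →
      (a * c) ^ k - (a * c) ^ (k + 1) * h ∈ Ideal.jacobson (⊥ : Ideal R) →
      (b * d) ^ (k + 1) - (b * d) ^ (k + 2) * (b * h ^ 2 * d) ∈
        Ideal.jacobson (⊥ : Ideal R) := by
    intro k hk hkJ
    obtain ⟨m, rfl⟩ : ∃ m, k = m + 1 := ⟨k - 1, (Nat.succ_pred_eq_of_pos hk).symm⟩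
    have p1 : (b * d) ^ (m + 1 + 1) = b * (a * c) ^ (m + 1) * d := hpow m
    have p2 : (b * d) ^ (m + 1 + 2) = b * (a * c) ^ (m + 2) * d := by
      exact hpow (m + 1)
    have key : (b * d) ^ (m + 1 + 1) - (b * d) ^ (m + 1 + 2) * (b * h ^ 2 * d) =
        b * ((a * c) ^ (m + 1) - (a * c) ^ (m + 1 + 1) * h) * d := by
      rw [p1, p2]
      have e2 : b * (a * c) ^ (m + 2) * d * (b * h ^ 2 * d) =
          b * ((a * c) ^ (m + 1 + 1) * h) * d := by
        calc b * (a * c) ^ (m + 2) * d * (b * h ^ 2 * d)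
            = b * (a * c) ^ (m + 2) * ((d * b) * (h * h)) * d := by noncomm_ring
          _ = b * (a * c) ^ (m + 2) * ((h * h) * (d * b)) * d := by rw [hdbhh]
          _ = b * (a * c) ^ (m + 2) * (h * h) * (d * b * d) := by noncomm_ring
          _ = b * (a * c) ^ (m + 2) * (h * h) * (a * c * d) := by rw [h2]
          _ = b * ((a * c) ^ (m + 2) * (h * h * (a * c))) * d := by noncomm_ring
          _ = b * ((a * c) ^ (m + 2) * h) * d := by rw [hh2A]
          _ = b * ((a * c) ^ (m + 1 + 1) * h) * d := by norm_num
      rw [e2]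
      noncomm_ring
    rw [key]
    exact jacobson_bot_mul_right _ d (Ideal.mul_mem_left _ b hkJ)
  refine ⟨⟨?_, ?_, k0 + 1, le_add_self, main3 k0 hk0 hk0J⟩, main3⟩
  · -- b*h^2*d = (b*h^2*d)*(b*d)*(b*h^2*d)
    symm
    calc (b * h ^ 2 * d) * (b * d) * (b * h ^ 2 * d)
        = b * (h * h) * (d * b * d) * (b * (h * h) * d) := by noncomm_ring
      _ = b * (h * h) * (a * c * d) * (b * (h * h) * d) := by rw [h2]
      _ = b * (h * h) * (a * c) * ((d * b) * (h * h)) * d := by noncomm_ring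
      _ = b * (h * h) * (a * c) * ((h * h) * (d * b)) * d := by rw [hdbhh]
      _ = b * (h * h * (a * c)) * (h * h) * (d * b * d) := by noncomm_ring
      _ = b * h * (h * h) * (d * b * d) := by rw [hh2A]
      _ = b * h * (h * h) * (a * c * d) := by rw [h2]
      _ = b * (h * (h * h * (a * c))) * d := by noncomm_ring
      _ = b * (h * h) * d := by rw [hh2A]
      _ = b * h ^ 2 * d := by noncomm_ring
  · -- double commutant
    intro y hy
    have hdybA : d * y * b * (a * c) = (a * c) * (d * y * b) := by
      calc d * y * b * (a * c) = d * y * (b * a * c) := by noncomm_ring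
        _ = d * y * (b * d * b) := by rw [← h1]
        _ = d * (y * (b * d)) * b := by noncomm_ring
        _ = d * ((b * d) * y) * b := by rw [hy]
        _ = (d * b * d) * (y * b) := by noncomm_ring
        _ = (a * c * d) * (y * b) := by rw [h2]
        _ = (a * c) * (d * y * b) := by noncomm_ring
    have hdyb : h * (d * y * b) = (d * y * b) * h := hA2 (d * y * b) hdybA
    have hdyb4 : h ^ 4 * (d * y * b) = (d * y * b) * h ^ 4 :=
      (Commute.pow_left (hdyb : Commute h (d * y * b)) 4).eq
    have hcomm2 : (d * b) * (d * y * b) = (d * y * b) * (d * b) := by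
      calc (d * b) * (d * y * b) = d * ((b * d) * y) * b := by noncomm_ring
        _ = d * (y * (b * d)) * b := by rw [← hy]
        _ = (d * y * b) * (d * b) := by noncomm_ring
    have e1 : (b * h ^ 2 * d) * y = b * d * (y * (b * (h * h * h) * d)) := by
      calc (b * h ^ 2 * d) * y
          = (b * h ^ 4 * d * (b * d) * (b * d)) * y := by rw [hgL]
        _ = b * h ^ 4 * d * (b * d) * ((b * d) * y) := by noncomm_ring
        _ = b * h ^ 4 * d * (b * d) * (y * (b * d)) := by rw [← hy]
        _ = b * h ^ 4 * d * ((b * d) * y) * (b * d) := by noncomm_ring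
        _ = b * h ^ 4 * d * (y * (b * d)) * (b * d) := by rw [← hy]
        _ = b * (h ^ 4 * (d * y * b)) * (d * b * d) := by noncomm_ring
        _ = b * (h ^ 4 * (d * y * b)) * (a * c * d) := by rw [h2]
        _ = b * ((d * y * b) * h ^ 4) * (a * c * d) := by rw [hdyb4]
        _ = b * d * (y * (b * ((h * h) * (h * h * (a * c))) * d)) := by noncomm_ring
        _ = b * d * (y * (b * ((h * h) * h) * d)) := by rw [hh2A]
        _ = b * d * (y * (b * (h * h * h) * d)) := by noncomm_ring
    have e2 : y * (b * h ^ 2 * d) = b * d * (y * (b * (h * h * h) * d)) := by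
      calc y * (b * h ^ 2 * d)
          = y * ((b * d) * ((b * d) * (b * h ^ 4 * d))) := by rw [hgR]
        _ = (y * (b * d)) * ((b * d) * (b * h ^ 4 * d)) := by noncomm_ring
        _ = ((b * d) * y) * ((b * d) * (b * h ^ 4 * d)) := by rw [hy]
        _ = (b * d) * ((y * (b * d)) * (b * h ^ 4 * d)) := by noncomm_ring
        _ = (b * d) * (((b * d) * y) * (b * h ^ 4 * d)) := by rw [hy]
        _ = b * ((d * b) * (d * y * b)) * (h ^ 4 * d) := by noncomm_ring
        _ = b * ((d * y * b) * (d * b)) * (h ^ 4 * d) := by rw [hcomm2]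
        _ = b * (d * y * b) * ((d * b) * h ^ 4) * d := by noncomm_ring
        _ = b * (d * y * b) * (h ^ 4 * (d * b)) * d := by rw [hdbh4]
        _ = b * (d * y * b) * h ^ 4 * (d * b * d) := by noncomm_ring
        _ = b * (d * y * b) * h ^ 4 * (a * c * d) := by rw [h2]
        _ = b * d * (y * (b * ((h * h) * (h * h * (a * c))) * d)) := by noncomm_ring
        _ = b * d * (y * (b * ((h * h) * h) * d)) := by rw [hh2A]
        _ = b * d * (y * (b * (h * h * h) * d)) := by noncomm_ring
    exact e1.trans e2.symm
end

section
/- Let R be an associative ring with identity and let a, b ∈ R. If a*b has a pseudo Drazin inverse, then b*a has a pseudo Drazin inverse and (b*a)^† = b*((a*b)^†)^2*a. -/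
private lemma pow_swap {R : Type*} [Ring R] (a b : R) (n : ℕ) :
    b * (a * b) ^ n = (b * a) ^ n * b := by
  induction n with
  | zero => simp
  | succ n ih =>
    calc b * (a * b) ^ (n + 1) = b * a * (b * (a * b) ^ n) := by
          rw [pow_succ']; noncomm_ring
      _ = b * a * ((b * a) ^ n * b) := by rw [ih]
      _ = (b * a) ^ (n + 1) * b := by rw [pow_succ']; noncomm_ring

/-- Cline's formula for the pseudo Drazin inverse. -/
theorem cline_formula_pdrazin {R : Type*} [Ring R] (a b h : R)
    (hab : IsPDrazinInverse (a * b) h) :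
    IsPDrazinInverse (b * a) (b * h ^ 2 * a) := by
  obtain ⟨h1, hcomm, k, hk, hJ⟩ := hab
  have hch : h * (a * b) = a * b * h := hcomm (a * b) rfl
  have hL' : a * b * (h * h) = h := by
    calc a * b * (h * h) = (a * b * h) * h := by noncomm_ring
      _ = (h * (a * b)) * h := by rw [← hch]
      _ = h := h1.symm
  have hR' : h * h * (a * b) = h := by
    calc h * h * (a * b) = h * (h * (a * b)) := by noncomm_ring
      _ = h * (a * b * h) := by rw [hch]
      _ = (h * (a * b)) * h := by noncomm_ring
      _ = h := h1.symm
  have f1 : ∀ x : R, a * (b * (h * (h * x))) = h * x := fun x => by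
    calc a * (b * (h * (h * x))) = (a * b * (h * h)) * x := by noncomm_ring
      _ = h * x := by rw [hL']
  have f2 : ∀ x : R, h * (h * (a * (b * x))) = h * x := fun x => by
    calc h * (h * (a * (b * x))) = (h * h * (a * b)) * x := by noncomm_ring
      _ = h * x := by rw [hR']
  refine ⟨?_, ?_, ?_⟩
  · simp only [pow_two, mul_assoc]
    rw [f1, f2]
  · intro y hy
    have hayb : (a * y * b) * (a * b) = (a * b) * (a * y * b) := by
      calc (a * y * b) * (a * b) = a * (y * (b * a)) * b := by noncomm_ring
        _ = a * (b * a * y) * b := by rw [hy]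
        _ = (a * b) * (a * y * b) := by noncomm_ring
    have hc : h * (a * y * b) = (a * y * b) * h := hcomm _ hayb
    have fc : ∀ x : R, h * (a * (y * (b * x))) = a * (y * (b * (h * x))) := fun x => by
      calc h * (a * (y * (b * x))) = (h * (a * y * b)) * x := by noncomm_ring
        _ = ((a * y * b) * h) * x := by rw [hc]
        _ = a * (y * (b * (h * x))) := by noncomm_ring
    have fy : ∀ x : R, b * (a * (y * x)) = y * (b * (a * x)) := fun x => by
      calc b * (a * (y * x)) = (b * a * y) * x := by noncomm_ring
        _ = (y * (b * a)) * x := by rw [← hy]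
        _ = y * (b * (a * x)) := by noncomm_ring
    have hy' : b * (a * y) = y * (b * a) := by
      rw [← mul_assoc, ← hy]
    simp only [pow_two, mul_assoc]
    rw [← f2 (a * y), hy', fc, fc, fc, fy, f1]
  · refine ⟨k + 1, by omega, ?_⟩
    have e1 : ∀ n : ℕ, (b * a) ^ (n + 1) = b * (a * b) ^ n * a := fun n => by
      rw [pow_succ, pow_swap]
      simp only [mul_assoc]
    have e2 : (b * a) ^ (k + 1 + 1) * (b * h ^ 2 * a) = b * ((a * b) ^ (k + 1) * h) * a := by
      rw [e1 (k + 1), pow_two]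
      have step : b * (a * b) ^ (k + 1) * a * (b * (h * h) * a)
          = b * ((a * b) ^ (k + 1) * (a * b * (h * h))) * a := by
        simp only [mul_assoc]
      rw [step, hL']
    have heq : (b * a) ^ (k + 1) - (b * a) ^ (k + 1 + 1) * (b * h ^ 2 * a)
        = b * ((a * b) ^ k - (a * b) ^ (k + 1) * h) * a := by
      rw [mul_sub, sub_mul, e1 k, e2]
    rw [heq]
    apply Ideal.mul_mem_right
    exact Ideal.mul_mem_left _ b hJ
end

section
/- Let R be an associative ring with identity and let a, b, c, d ∈ R satisfy b*d*b = b*a*c and d*b*d = a*c*d. If a*c has a Drazin inverse, then b*d has a Drazin inverse, (b*d)^D = b*((a*c)^D)^2*d, and if (a*c)^k = (a*c)^(k+1)*(a*c)^D then (b*d)^(k+1) = (b*d)^(k+2)*(b*d)^D (so the Drazin index satisfies i(b*d) ≤ i(a*c) + 1). -/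
/-- `e` is a Drazin inverse of `a`: `e = e*a*e`, `e` lies in the double
commutant of `a`, and `a - a^2*e` is nilpotent. -/
def IsDrazinInverse {R : Type*} [Ring R] (a e : R) : Prop :=
  e = e * a * e ∧ (∀ y : R, y * a = a * y → e * y = y * e) ∧
    IsNilpotent (a - a ^ 2 * e)

theorem drazin_bd_of_drazin_ac {R : Type*} [Ring R]
    (a b c d h : R) (h1 : b * d * b = b * a * c) (h2 : d * b * d = a * c * d)
    (hac : IsDrazinInverse (a * c) h) :
    IsDrazinInverse (b * d) (b * h ^ 2 * d) ∧
      ∀ k : ℕ, 1 ≤ k → (a * c) ^ k = (a * c) ^ (k + 1) * h →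
        (b * d) ^ (k + 1) = (b * d) ^ (k + 2) * (b * h ^ 2 * d) := by
  obtain ⟨he, hc, hn⟩ := hac
  -- basic "continuation form" rewrite rules
  have L1 : ∀ x : R, d*(b*(d*x)) = a*(c*(d*x)) := fun x => by
    simpa [mul_assoc] using congrArg (· * x) h2
  have L2 : ∀ x : R, b*(d*(b*x)) = b*(a*(c*x)) := fun x => by
    simpa [mul_assoc] using congrArg (· * x) h1
  have h2' : d*(b*d) = a*(c*d) := by simpa [mul_assoc] using h2
  have h1' : b*(d*b) = b*(a*c) := by simpa [mul_assoc] using h1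
  have hA : h*(a*c) = (a*c)*h := hc (a*c) rfl
  have L4 : ∀ x : R, h*(a*(c*x)) = a*(c*(h*x)) := fun x => by
    simpa [mul_assoc] using congrArg (· * x) hA
  have L3 : ∀ x : R, h*(a*(c*(h*x))) = h*x := fun x => by
    simpa [mul_assoc] using congrArg (· * x) he.symm
  have hh : ∀ x : R, h*(h*(a*(c*x))) = h*x := fun x => by rw [L4, L3]
  have hrev : ∀ x : R, h*x = h*(h*(a*(c*x))) := fun x => (hh x).symm
  have L5 : ∀ x : R, d*(b*(a*(c*x))) = a*(c*(d*(b*x))) := fun x => by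
    rw [← L2, L1]
  have hdb : (d*b)*(a*c) = (a*c)*(d*b) := by simpa [mul_assoc] using L5 1
  have hdbh : h*(d*b) = (d*b)*h := hc _ hdb
  have L6 : ∀ x : R, h*(d*(b*x)) = d*(b*(h*x)) := fun x => by
    simpa [mul_assoc] using congrArg (· * x) hdbh
  -- power lemmas
  have P1 : ∀ n : ℕ, (b*d)^n * b = b*(a*c)^n := by
    intro n; induction n with
    | zero => simp
    | succ n ih =>
      calc (b*d)^(n+1)*b = (b*d)^n*(b*d*b) := by rw [pow_succ, mul_assoc]
        _ = (b*d)^n*(b*(a*c)) := by rw [h1, mul_assoc]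
        _ = b*((a*c)^n*(a*c)) := by rw [← mul_assoc, ih, mul_assoc]
        _ = b*(a*c)^(n+1) := by rw [pow_succ]
  have P3 : ∀ n : ℕ, (b*d)^(n+1) = b*(a*c)^n*d := fun n => by
    rw [pow_succ, ← mul_assoc, P1]
  -- condition 1 : e = e * a * e
  have cond1 : b*h^2*d = b*h^2*d*(b*d)*(b*h^2*d) := by
    simp only [pow_two, mul_assoc]
    rw [L1, ← L6, ← L6, h2', hh, hh]
  -- condition 2 : double commutant
  have cond2 : ∀ y : R, y*(b*d) = (b*d)*y → (b*h^2*d)*y = y*(b*h^2*d) := by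
    intro y hy
    have hy1 : b*(d*y) = y*(b*d) := by simpa [mul_assoc] using hy.symm
    have hy2 : ∀ x : R, y*(b*(d*x)) = b*(d*(y*x)) := fun x => by
      simpa [mul_assoc] using congrArg (· * x) hy
    have hz : (d*(y*b))*(a*c) = (a*c)*(d*(y*b)) := by
      simp only [mul_assoc]
      rw [← h1', hy2, L1]
    have hzh : h*(d*(y*b)) = (d*(y*b))*h := hc _ hz
    have hz' : ∀ x : R, h*(d*(y*(b*x))) = d*(y*(b*(h*x))) := fun x => by
      simpa [mul_assoc] using congrArg (· * x) hzh
    simp only [pow_two, mul_assoc]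
    conv_lhs => rw [hrev (d*y), hrev (a*(c*(d*y))), ← L1, ← L1, hy1, ← hy2,
      h2', hz', hz', hz', hz', hh]
    conv_rhs => rw [hrev d, L4, L4, L4, ← L2, hy2]
  -- condition 3 : nilpotency
  have hNE : (b*d)^2*(b*h^2*d) = b*((a*c)*h)*d := by
    rw [← mul_assoc ((b*d)^2), ← mul_assoc ((b*d)^2), P1]
    simp only [pow_two, mul_assoc]
    rw [← L4, L3]
  have t1 : (b*d)*(b*d) = b*(a*c)*d := by
    simp only [mul_assoc]; rw [h2']
  have t2 : (b*d)*(b*((a*c)*h)*d) = b*((a*c)^2*h)*d := by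
    simp only [pow_two, mul_assoc]; rw [L5, ← L6, h2', L4]
  have t3 : (b*((a*c)*h)*d)*(b*d) = b*((a*c)^2*h)*d := by
    simp only [pow_two, mul_assoc]; rw [h2', L4]
  have t4 : (b*((a*c)*h)*d)*(b*((a*c)*h)*d) = b*((a*c)^2*h)*d := by
    simp only [pow_two, mul_assoc]; rw [L5, ← L6, h2', L3, L4]
  have s1 : ∀ u : R, (b*u*d)*(b*d) = b*(u*(a*c))*d := fun u => by
    simp only [mul_assoc]; rw [h2']
  have s2 : ∀ u : R, (b*u*d)*(b*((a*c)*h)*d) = b*(u*((a*c)^2*h))*d := fun u => by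
    simp only [pow_two, mul_assoc]; rw [L5, ← L6, h2', L4]
  have key : ∀ n : ℕ, (b*d - b*((a*c)*h)*d)^(n+2)
      = b*((a*c) - (a*c)^2*h)^(n+1)*d := by
    intro n; induction n with
    | zero =>
      rw [sq, pow_one]
      simp only [mul_sub, sub_mul]
      rw [t1, t2, t3, t4]
      abel
    | succ n ih =>
      have e : (b*d - b*((a*c)*h)*d)^(n+1+2)
          = (b*d - b*((a*c)*h)*d)^(n+2) * (b*d - b*((a*c)*h)*d) := pow_succ _ _
      rw [e, ih, mul_sub, s1, s2, pow_succ ((a*c) - (a*c)^2*h) (n+1),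
        mul_sub ((((a*c) - (a*c)^2*h))^(n+1)), mul_sub b, sub_mul]
  have cond3 : IsNilpotent (b*d - (b*d)^2*(b*h^2*d)) := by
    obtain ⟨m, hm⟩ := hn
    exact ⟨m+2, by rw [hNE, key m, pow_succ, hm, zero_mul, mul_zero, zero_mul]⟩
  refine ⟨⟨cond1, cond2, cond3⟩, ?_⟩
  -- index estimate
  intro k _ hk
  have e1 : (a*c)^(k+2)*h = (a*c)^(k+1) := by
    rw [pow_succ' (a*c) (k+1), mul_assoc, ← hk, ← pow_succ']
  have e2 : (a*c)^(k+2)*h^2 = (a*c)^k := by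
    rw [pow_two, ← mul_assoc, e1, ← hk]
  rw [P3 k, ← e2, ← mul_assoc ((b*d)^(k+2)), ← mul_assoc ((b*d)^(k+2)), P1]
  simp only [mul_assoc]
end

section
/- Let R be an associative ring with identity and let a, b, c, d ∈ R satisfy b*d*b = b*a*c and d*b*d = a*c*d. If a*c has a group inverse (a*c)^#, then b*d has a Drazin inverse with (b*d)^D = b*((a*c)^#)^2*d and Drazin index at most 2; that is, (b*d)^3*(b*d)^D = (b*d)^2. -/
/-- `g` is a group inverse of `a`: `g = g*a*g`, `a*g = g*a` and `a = a*g*a`. -/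
def IsGroupInverse {R : Type*} [Ring R] (a g : R) : Prop :=
  g = g * a * g ∧ a * g = g * a ∧ a = a * g * a

theorem drazin_bd_of_group_inverse_ac {R : Type*} [Ring R]
    (a b c d g : R) (h1 : b * d * b = b * a * c) (h2 : d * b * d = a * c * d)
    (hac : IsGroupInverse (a * c) g) :
    IsDrazinInverse (b * d) (b * g ^ 2 * d) ∧
      (b * d) ^ 3 * (b * g ^ 2 * d) = (b * d) ^ 2 := by
  have h1' : b * d * b = b * (a * c) := by rw [h1, mul_assoc]
  obtain ⟨A, hA⟩ : ∃ A : R, A = a * c := ⟨a * c, rfl⟩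
  rw [← hA] at h1' h2 hac
  obtain ⟨hg1, hg2, hg3⟩ := hac
  -- now h2 : d*b*d = A*d, h1' : b*d*b = b*A
  have hggA : g = g * g * A := by
    calc g = g * A * g := hg1
    _ = g * (A * g) := by rw [mul_assoc]
    _ = g * (g * A) := by rw [hg2]
    _ = g * g * A := by rw [mul_assoc]
  have hAgg : g = A * g * g := by
    calc g = g * A * g := hg1
    _ = A * g * g := by rw [← hg2]
  have hAAg : A * A * g = A := by
    calc A * A * g = A * (A * g) := by rw [mul_assoc]
    _ = A * (g * A) := by rw [hg2]
    _ = A * g * A := by rw [mul_assoc]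
    _ = A := hg3.symm
  have hgAA : g * A * A = A := by
    calc g * A * A = A * g * A := by rw [hg2]
    _ = A := hg3.symm
  have comm_g : ∀ y : R, y * A = A * y → y * g = g * y := by
    intro y hy
    have e1 : g * y = A * g * y * g := by
      calc g * y = g * g * A * y := by rw [← hggA]
      _ = g * g * (y * A) := by rw [mul_assoc, hy]
      _ = g * g * (y * (A * A * g)) := by rw [hAAg]
      _ = g * g * (y * A) * (A * g) := by simp only [mul_assoc]
      _ = g * g * (A * y) * (A * g) := by rw [hy]
      _ = g * g * A * (y * (A * g)) := by simp only [mul_assoc]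
      _ = g * (y * (A * g)) := by rw [← hggA]
      _ = g * (y * A) * g := by simp only [mul_assoc]
      _ = g * (A * y) * g := by rw [hy]
      _ = g * A * (y * g) := by simp only [mul_assoc]
      _ = A * g * (y * g) := by rw [hg2]
      _ = A * g * y * g := by rw [← mul_assoc]
    have e2 : y * g = A * g * y * g := by
      calc y * g = y * (A * g * g) := by rw [← hAgg]
      _ = y * A * (g * g) := by simp only [mul_assoc]
      _ = A * y * (g * g) := by rw [hy]
      _ = A * g * A * y * (g * g) := by rw [← hg3]
      _ = A * g * (A * y) * (g * g) := by simp only [mul_assoc]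
      _ = A * g * (y * A) * (g * g) := by rw [hy]
      _ = A * g * y * (A * g * g) := by simp only [mul_assoc]
      _ = A * g * y * g := by rw [← hAgg]
    rw [e2, e1]
  have hdbA : d * b * A = A * (d * b) := by
    calc d * b * A = d * (b * A) := by rw [mul_assoc]
    _ = d * (b * d * b) := by rw [← h1']
    _ = d * b * d * b := by simp only [mul_assoc]
    _ = A * d * b := by rw [h2]
    _ = A * (d * b) := by rw [mul_assoc]
  have hdbg : d * b * g = g * (d * b) := comm_g (d * b) hdbA
  refine ⟨⟨?_, ?_, ⟨2, ?_⟩⟩, ?_⟩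
  · -- e = e * (b*d) * e
    have : b * g ^ 2 * d * (b * d) * (b * g ^ 2 * d)
        = b * g ^ 2 * d := by
      calc b * g ^ 2 * d * (b * d) * (b * g ^ 2 * d)
          = b * g * g * (d * b * d * b) * (g * (g * d)) := by
            rw [pow_two]; simp only [mul_assoc]
      _ = b * g * g * (A * d * b) * (g * (g * d)) := by rw [h2]
      _ = b * g * g * A * (d * b * g) * (g * d) := by simp only [mul_assoc]
      _ = b * g * g * A * (g * (d * b)) * (g * d) := by rw [hdbg]
      _ = b * g * g * A * g * (d * b * g) * d := by simp only [mul_assoc]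
      _ = b * g * g * A * g * (g * (d * b)) * d := by rw [hdbg]
      _ = b * (g * g * A) * (g * g) * (d * b * d) := by simp only [mul_assoc]
      _ = b * g * (g * g) * (A * d) := by rw [← hggA, h2]
      _ = b * g * (g * g * A) * d := by simp only [mul_assoc]
      _ = b * g * g * d := by rw [← hggA]
      _ = b * g ^ 2 * d := by rw [pow_two]; simp only [mul_assoc]
    exact this.symm
  · -- double commutant
    intro y hy
    have hzA : d * y * b * A = A * (d * y * b) := by
      calc d * y * b * A = d * y * (b * A) := by simp only [mul_assoc]
      _ = d * y * (b * d * b) := by rw [← h1']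
      _ = d * (y * (b * d)) * b := by simp only [mul_assoc]
      _ = d * (b * d * y) * b := by rw [hy]
      _ = d * b * d * (y * b) := by simp only [mul_assoc]
      _ = A * d * (y * b) := by rw [h2]
      _ = A * (d * y * b) := by simp only [mul_assoc]
    have hzg : d * y * b * g = g * (d * y * b) := comm_g (d * y * b) hzA
    have hey : b * g ^ 2 * d * y = b * g * g * g * (d * y * b) * d := by
      calc b * g ^ 2 * d * y
          = b * (g * (g * g * A)) * d * y := by rw [pow_two, ← hggA]
      _ = b * g * g * g * (A * d) * y := by simp only [mul_assoc]
      _ = b * g * g * g * (d * b * d) * y := by rw [h2]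
      _ = b * g * g * g * d * (b * d * y) := by simp only [mul_assoc]
      _ = b * g * g * g * d * (y * (b * d)) := by rw [hy]
      _ = b * g * g * g * (d * y * b) * d := by simp only [mul_assoc]
    have hye : y * (b * g ^ 2 * d) = b * g * g * g * (d * y * b) * d := by
      calc y * (b * g ^ 2 * d)
          = y * (b * (A * g * g * g) * d) := by rw [pow_two, ← hAgg]
      _ = y * (b * A) * (g * (g * (g * d))) := by simp only [mul_assoc]
      _ = y * (b * d * b) * (g * (g * (g * d))) := by rw [h1']
      _ = y * (b * d) * (b * (g * (g * (g * d)))) := by simp only [mul_assoc]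
      _ = b * d * y * (b * (g * (g * (g * d)))) := by rw [hy]
      _ = b * (d * y * b * g) * (g * (g * d)) := by simp only [mul_assoc]
      _ = b * (g * (d * y * b)) * (g * (g * d)) := by rw [hzg]
      _ = b * g * (d * y * b * g) * (g * d) := by simp only [mul_assoc]
      _ = b * g * (g * (d * y * b)) * (g * d) := by rw [hzg]
      _ = b * g * g * (d * y * b * g) * d := by simp only [mul_assoc]
      _ = b * g * g * (g * (d * y * b)) * d := by rw [hzg]
      _ = b * g * g * g * (d * y * b) * d := by simp only [mul_assoc]
    exact hey.trans hye.symm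
  · -- nilpotent of index 2
    have hsq : (b * d) ^ 2 * (b * g ^ 2 * d) = b * (g * A) * d := by
      calc (b * d) ^ 2 * (b * g ^ 2 * d)
          = b * d * (b * d) * (b * (g * g) * d) := by rw [pow_two, pow_two]
      _ = b * (d * b * d) * (b * (g * g) * d) := by simp only [mul_assoc]
      _ = b * (A * d) * (b * (g * g) * d) := by rw [h2]
      _ = b * A * (d * b * g) * (g * d) := by simp only [mul_assoc]
      _ = b * A * (g * (d * b)) * (g * d) := by rw [hdbg]
      _ = b * A * g * (d * b * g) * d := by simp only [mul_assoc]
      _ = b * A * g * (g * (d * b)) * d := by rw [hdbg]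
      _ = b * ((A * g * g) * (d * b * d)) := by simp only [mul_assoc]
      _ = b * (g * (A * d)) := by rw [← hAgg, h2]
      _ = b * (g * A) * d := by simp only [mul_assoc]
    rw [hsq]
    have t1 : b * d * (b * d) = b * (A * d) := by
      calc b * d * (b * d) = b * (d * b * d) := by simp only [mul_assoc]
      _ = b * (A * d) := by rw [h2]
    have t2 : b * d * (b * (g * A) * d) = b * (A * d) := by
      calc b * d * (b * (g * A) * d)
          = b * (d * b * g) * (A * d) := by simp only [mul_assoc]
      _ = b * (g * (d * b)) * (A * d) := by rw [hdbg]
      _ = b * g * (d * b * A) * d := by simp only [mul_assoc]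
      _ = b * g * (A * (d * b)) * d := by rw [hdbA]
      _ = b * g * A * (d * b * d) := by simp only [mul_assoc]
      _ = b * g * A * (A * d) := by rw [h2]
      _ = b * (g * A * A) * d := by simp only [mul_assoc]
      _ = b * (A * d) := by rw [hgAA, mul_assoc]
    have t3 : b * (g * A) * d * (b * d) = b * (A * d) := by
      calc b * (g * A) * d * (b * d)
          = b * g * A * (d * b * d) := by simp only [mul_assoc]
      _ = b * g * A * (A * d) := by rw [h2]
      _ = b * (g * A * A) * d := by simp only [mul_assoc]
      _ = b * (A * d) := by rw [hgAA, mul_assoc]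
    have t4 : b * (g * A) * d * (b * (g * A) * d) = b * (A * d) := by
      calc b * (g * A) * d * (b * (g * A) * d)
          = b * g * A * (d * b * g) * (A * d) := by simp only [mul_assoc]
      _ = b * g * A * (g * (d * b)) * (A * d) := by rw [hdbg]
      _ = b * (g * A * g) * (d * b * A) * d := by simp only [mul_assoc]
      _ = b * (g * A * g) * (A * (d * b)) * d := by rw [hdbA]
      _ = b * (g * A * g) * A * (d * b * d) := by simp only [mul_assoc]
      _ = b * g * A * (A * d) := by rw [← hg1, h2]
      _ = b * (g * A * A) * d := by simp only [mul_assoc]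
      _ = b * (A * d) := by rw [hgAA, mul_assoc]
    calc (b * d - b * (g * A) * d) ^ 2
        = b * d * (b * d) - b * d * (b * (g * A) * d)
          - b * (g * A) * d * (b * d) + b * (g * A) * d * (b * (g * A) * d) := by
          noncomm_ring
    _ = b * (A * d) - b * (A * d) - b * (A * d) + b * (A * d) := by
          rw [t1, t2, t3, t4]
    _ = 0 := by abel
  · -- index ≤ 2
    have hcube : (b * d) ^ 3 = b * A * (A * d) := by
      calc (b * d) ^ 3 = b * d * (b * d) * (b * d) := by rw [pow_succ, pow_two]
      _ = b * (d * b * d) * (b * d) := by simp only [mul_assoc]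
      _ = b * (A * d) * (b * d) := by rw [h2]
      _ = b * A * (d * b * d) := by simp only [mul_assoc]
      _ = b * A * (A * d) := by rw [h2]
    calc (b * d) ^ 3 * (b * g ^ 2 * d)
        = b * A * (A * d) * (b * (g * g) * d) := by rw [hcube, pow_two]
    _ = b * A * A * (d * b * g) * (g * d) := by simp only [mul_assoc]
    _ = b * A * A * (g * (d * b)) * (g * d) := by rw [hdbg]
    _ = b * A * A * g * (d * b * g) * d := by simp only [mul_assoc]
    _ = b * A * A * g * (g * (d * b)) * d := by rw [hdbg]
    _ = b * A * (A * g * g) * (d * b * d) := by simp only [mul_assoc]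
    _ = b * A * g * (A * d) := by rw [← hAgg, h2]
    _ = b * (A * g * A) * d := by simp only [mul_assoc]
    _ = b * A * d := by rw [← hg3]
    _ = b * (d * b * d) := by rw [mul_assoc, h2]
    _ = (b * d) ^ 2 := by rw [pow_two]; simp only [mul_assoc]
end

section
/- Let R be an associative ring with identity and let a, b, c, d ∈ R satisfy b*d*b = b*a*c and d*b*d = a*c*d. If 1 - a*c is a unit of R, then 1 - b*d is a unit of R and (1 - b*d)^(-1) = 1 + b*(1 - a*c)^(-1)*d. -/
/-- Generalized Jacobson's Lemma: if `bdb = bac`, `dbd = acd` and `1 - ac`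
is a unit, then `1 - bd` is a unit with inverse `1 + b*(1-ac)⁻¹*d`. -/
theorem generalized_jacobson_lemma {R : Type*} [Ring R]
    (a b c d : R) (h1 : b * d * b = b * a * c) (h2 : d * b * d = a * c * d)
    (hac : IsUnit (1 - a * c)) :
    IsUnit (1 - b * d) ∧
      Ring.inverse (1 - b * d) = 1 + b * Ring.inverse (1 - a * c) * d := by
  set u := Ring.inverse (1 - a * c) with hu
  have hu1 : (1 - a * c) * u = 1 := Ring.mul_inverse_cancel _ hac
  have hu2 : u * (1 - a * c) = 1 := Ring.inverse_mul_cancel _ hac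
  have e1 : (1 - b * d) * (1 + b * u * d) = 1 := by
    have step : (1 - b * d) * (1 + b * u * d) =
        1 + b * ((1 - a * c) * u) * d - b * d - (b * d * b) * (u * d)
          + (b * a * c) * (u * d) := by noncomm_ring
    rw [step, h1, hu1]; noncomm_ring
  have e2 : (1 + b * u * d) * (1 - b * d) = 1 := by
    have step : (1 + b * u * d) * (1 - b * d) =
        1 + b * (u * (1 - a * c)) * d - b * d - (b * u) * (d * b * d)
          + (b * u) * (a * c * d) := by noncomm_ring
    rw [step, h2, hu2]; noncomm_ring
  have hbd : IsUnit (1 - b * d) := ⟨⟨1 - b * d, 1 + b * u * d, e1, e2⟩, rfl⟩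
  refine ⟨hbd, ?_⟩
  have := congrArg (fun x => Ring.inverse (1 - b * d) * x) e1
  simpa [← mul_assoc, Ring.inverse_mul_cancel _ hbd] using this.symm
end

section
/- Let R be an associative ring with identity, let a, b, c, d ∈ R satisfy b*d*b = b*a*c and d*b*d = a*c*d, let h be a generalized Drazin inverse of a*c, and set e = b*h^2*d. Then e commutes with every element of R that commutes with b*d (i.e., e lies in the double commutant of b*d). -/
theorem e_mem_double_commutant {R : Type*} [Ring R]
    (a b c d h : R) (h1 : b * d * b = b * a * c) (h2 : d * b * d = a * c * d)
    (hac : IsGDrazinInverse (a * c) h) :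
    ∀ y : R, y * (b * d) = (b * d) * y →
      (b * h ^ 2 * d) * y = y * (b * h ^ 2 * d) := by
  obtain ⟨hh, hcomm, -⟩ := hac
  intro y hy
  have hca : h * (a * c) = (a * c) * h := hcomm (a * c) rfl
  have hz : (d * y * b) * (a * c) = (a * c) * (d * y * b) := by
    calc (d * y * b) * (a * c) = d * y * (b * a * c) := by noncomm_ring
    _ = d * y * (b * d * b) := by rw [h1]
    _ = d * (y * (b * d)) * b := by noncomm_ring
    _ = d * ((b * d) * y) * b := by rw [hy]
    _ = (d * b * d) * y * b := by noncomm_ring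
    _ = (a * c * d) * y * b := by rw [h2]
    _ = (a * c) * (d * y * b) := by noncomm_ring
  have hC : Commute h (d * y * b) := hcomm _ hz
  have h3a : h ^ 2 = h ^ 3 * (a * c) := by
    calc h ^ 2 = h * h := sq h
    _ = h * (h * (a * c) * h) := by rw [← hh]
    _ = h * ((a * c) * h * h) := by rw [hca]
    _ = h * (h * (a * c) * h) := by rw [← hca]
    _ = h * (h * ((a * c) * h)) := by rw [mul_assoc]
    _ = h * (h * (h * (a * c))) := by rw [← hca]
    _ = h ^ 3 * (a * c) := by noncomm_ring
  have h3b : h ^ 2 = (a * c) * h ^ 3 := by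
    calc h ^ 2 = h * h := sq h
    _ = (h * (a * c) * h) * h := by rw [← hh]
    _ = ((a * c) * h * h) * h := by rw [hca]
    _ = (a * c) * h ^ 3 := by noncomm_ring
  calc (b * h ^ 2 * d) * y = b * (h ^ 3 * (a * c)) * d * y := by rw [h3a]
    _ = b * h ^ 3 * ((a * c * d) * y) := by noncomm_ring
    _ = b * h ^ 3 * ((d * b * d) * y) := by rw [← h2]
    _ = b * h ^ 3 * (d * ((b * d) * y)) := by noncomm_ring
    _ = b * h ^ 3 * (d * (y * (b * d))) := by rw [← hy]
    _ = b * (h ^ 3 * (d * y * b)) * d := by noncomm_ring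
    _ = b * ((d * y * b) * h ^ 3) * d := by rw [(hC.pow_left 3).eq]
    _ = (b * d) * y * (b * h ^ 3 * d) := by noncomm_ring
    _ = y * (b * d) * (b * h ^ 3 * d) := by rw [← hy]
    _ = y * ((b * d * b) * h ^ 3 * d) := by noncomm_ring
    _ = y * ((b * a * c) * h ^ 3 * d) := by rw [h1]
    _ = y * (b * ((a * c) * h ^ 3) * d) := by noncomm_ring
    _ = y * (b * h ^ 2 * d) := by rw [← h3b]
end

section
/- Let R be an associative ring with identity, let a, b, c, d ∈ R satisfy b*d*b = b*a*c and d*b*d = a*c*d, let h be a generalized Drazin inverse of a*c, and set e = b*h^2*d. Then e*(b*d)*e = e. -/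
theorem e_bd_e_eq_e {R : Type*} [Ring R]
    (a b c d h : R) (h1 : b * d * b = b * a * c) (h2 : d * b * d = a * c * d)
    (hac : IsGDrazinInverse (a * c) h) :
    (b * h ^ 2 * d) * (b * d) * (b * h ^ 2 * d) = b * h ^ 2 * d := by
  obtain ⟨hinv, hcomm, -⟩ := hac
  -- d*b commutes with a*c
  have comm : (d * b) * (a * c) = (a * c) * (d * b) := by
    have e1 : d * (b * d * b) = d * (b * a * c) := by rw [h1]
    have e2 : (d * b * d) * b = (a * c * d) * b := by rw [h2]
    simp only [mul_assoc] at e1 e2 ⊢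
    rw [← e1, e2]
  have hdb : h * (d * b) = (d * b) * h := hcomm _ comm
  have hca : h * (a * c) = (a * c) * h := hcomm _ rfl
  -- parametrized versions
  have h2' : ∀ x : R, d * (b * (d * x)) = a * (c * (d * x)) := fun x => by
    simp only [← mul_assoc]; rw [h2]
  have hdb' : ∀ x : R, h * (d * (b * x)) = d * (b * (h * x)) := fun x => by
    simp only [← mul_assoc]; rw [show h * d * b = d * b * h by
      simpa [mul_assoc] using hdb]
  have hca' : ∀ x : R, h * (a * (c * x)) = a * (c * (h * x)) := fun x => by
    simp only [← mul_assoc]; rw [show h * a * c = a * c * h by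
      simpa [mul_assoc] using hca]
  have hinv' : ∀ x : R, h * (a * (c * (h * x))) = h * x := fun x => by
    simp only [← mul_assoc]
    rw [show h * a * c * h = h by simpa [mul_assoc] using hinv.symm]
  have h2'' : d * (b * d) = a * (c * d) := by simpa [mul_assoc] using h2
  simp only [sq, mul_assoc]
  -- goal : b * (h * (h * (d * (b * (d * (b * (h * (h * d)))))))) = b * (h * (h * d))
  rw [h2', ← hdb', ← hdb', h2'', hinv', hca', hinv']
end

section
/- Let R be an associative ring with identity, let a, b, c, d ∈ R satisfy b*d*b = b*a*c and d*b*d = a*c*d, let h be a generalized Drazin inverse of a*c, set e = b*h^2*d and p = 1 - (a*c)*h. Then b*d - (b*d)^2*e = b*(p*d), and moreover (p*d)*b*(p*d) = (p*a)*c*(p*d) and b*(p*d)*b = b*(p*a)*c. -/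
theorem key_identities {R : Type*} [Ring R]
    (a b c d h e p : R) (h1 : b * d * b = b * a * c) (h2 : d * b * d = a * c * d)
    (hac : IsGDrazinInverse (a * c) h)
    (he : e = b * h ^ 2 * d) (hp : p = 1 - (a * c) * h) :
    b * d - (b * d) ^ 2 * e = b * (p * d) ∧
      (p * d) * b * (p * d) = (p * a) * c * (p * d) ∧
      b * (p * d) * b = b * (p * a) * c := by
  obtain ⟨hhh, hcomm, -⟩ := hac
  have hch : h * (a * c) = a * c * h := hcomm (a * c) rfl
  have hdbac : d * b * (a * c) = a * c * (d * b) := by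
    calc d * b * (a * c) = d * (b * a * c) := by noncomm_ring
    _ = d * (b * d * b) := by rw [h1]
    _ = (d * b * d) * b := by noncomm_ring
    _ = (a * c * d) * b := by rw [h2]
    _ = a * c * (d * b) := by noncomm_ring
  have hdbh : h * (d * b) = d * b * h := hcomm (d * b) hdbac
  subst he hp
  have key : a * c * (a * c * (h * h)) = a * c * h := by
    calc a * c * (a * c * (h * h)) = a * c * (h * (a * c) * h) := by
          rw [hch]; noncomm_ring
    _ = a * c * h := by rw [← hhh]
  have hidem : a * c * h * (a * c * h) = a * c * h := by
    calc a * c * h * (a * c * h) = a * c * (h * (a * c) * h) := by noncomm_ring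
    _ = a * c * h := by rw [← hhh]
  have hpp : (1 - a * c * h) * (1 - a * c * h) = 1 - a * c * h := by
    calc (1 - a * c * h) * (1 - a * c * h)
        = 1 - a * c * h - a * c * h + a * c * h * (a * c * h) := by noncomm_ring
      _ = 1 - a * c * h - a * c * h + a * c * h := by rw [hidem]
      _ = 1 - a * c * h := by noncomm_ring
  have hachdb : a * c * h * (d * b) = d * b * (a * c * h) := by
    calc a * c * h * (d * b) = a * c * (h * (d * b)) := by noncomm_ring
      _ = a * c * (d * b * h) := by rw [hdbh]
      _ = (a * c * (d * b)) * h := by noncomm_ring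
      _ = (d * b * (a * c)) * h := by rw [hdbac]
      _ = d * b * (a * c * h) := by noncomm_ring
  have hpdb : (1 - a * c * h) * (d * b) = d * b * (1 - a * c * h) := by
    calc (1 - a * c * h) * (d * b) = d * b - a * c * h * (d * b) := by noncomm_ring
      _ = d * b - d * b * (a * c * h) := by rw [hachdb]
      _ = d * b * (1 - a * c * h) := by noncomm_ring
  have hch' : a * c * h * (a * c) = a * c * (a * c * h) := by
    calc a * c * h * (a * c) = a * c * (h * (a * c)) := by noncomm_ring
      _ = a * c * (a * c * h) := by rw [hch]
  have hacp : a * c * (1 - a * c * h) = (1 - a * c * h) * (a * c) := by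
    calc a * c * (1 - a * c * h) = a * c - a * c * (a * c * h) := by noncomm_ring
      _ = a * c - a * c * h * (a * c) := by rw [hch']
      _ = (1 - a * c * h) * (a * c) := by noncomm_ring
  refine ⟨?_, ?_, ?_⟩
  · have hxy : (b * d) ^ 2 * (b * h ^ 2 * d) = b * (a * c * h * d) := by
      calc (b * d) ^ 2 * (b * h ^ 2 * d)
          = b * d * (b * d * b) * (h * h) * d := by noncomm_ring
        _ = b * d * (b * a * c) * (h * h) * d := by rw [h1]
        _ = (b * d * b) * (a * c * (h * h)) * d := by noncomm_ring
        _ = (b * a * c) * (a * c * (h * h)) * d := by rw [h1]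
        _ = b * (a * c * (a * c * (h * h))) * d := by noncomm_ring
        _ = b * (a * c * h) * d := by rw [key]
        _ = b * (a * c * h * d) := by noncomm_ring
    rw [hxy]; noncomm_ring
  · calc (1 - a * c * h) * d * b * ((1 - a * c * h) * d)
        = (1 - a * c * h) * (d * b) * ((1 - a * c * h) * d) := by noncomm_ring
      _ = d * b * (1 - a * c * h) * ((1 - a * c * h) * d) := by rw [hpdb]
      _ = d * b * ((1 - a * c * h) * (1 - a * c * h)) * d := by noncomm_ring
      _ = d * b * (1 - a * c * h) * d := by rw [hpp]
      _ = (1 - a * c * h) * (d * b) * d := by rw [hpdb]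
      _ = (1 - a * c * h) * (d * b * d) := by noncomm_ring
      _ = (1 - a * c * h) * (a * c * d) := by rw [h2]
      _ = ((1 - a * c * h) * (1 - a * c * h)) * (a * c * d) := by rw [hpp]
      _ = (1 - a * c * h) * ((1 - a * c * h) * (a * c)) * d := by noncomm_ring
      _ = (1 - a * c * h) * (a * c * (1 - a * c * h)) * d := by rw [hacp]
      _ = (1 - a * c * h) * a * c * ((1 - a * c * h) * d) := by noncomm_ring
  · calc b * ((1 - a * c * h) * d) * b
        = b * (d * b) - b * (a * c * (h * (d * b))) := by noncomm_ring
      _ = b * (d * b) - b * (a * c * (d * b * h)) := by rw [hdbh]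
      _ = b * (d * b) - b * ((a * c * (d * b)) * h) := by noncomm_ring
      _ = b * (d * b) - b * ((d * b * (a * c)) * h) := by rw [hdbac]
      _ = (b * d * b) - (b * d * b) * ((a * c) * h) := by noncomm_ring
      _ = b * a * c - b * a * c * ((a * c) * h) := by rw [h1]
      _ = b * a * c - b * (a * c) * ((a * c) * h) := by noncomm_ring
      _ = b * a * c - b * (a * c) * (h * (a * c)) := by rw [hch]
      _ = b * ((1 - a * c * h) * a) * c := by noncomm_ring
end

section
/- Let R be an associative ring with identity, let a, b, c, d ∈ R satisfy b*d*b = b*a*c and d*b*d = a*c*d, let h be a generalized Drazin inverse of a*c, and set e = b*h^2*d. Then for every natural number k ≥ 1, (b*d)^(k+2)*e - (b*d)^(k+1) = b*((a*c)^(k+1)*h - (a*c)^k)*d. -/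
theorem power_identity {R : Type*} [Ring R]
    (a b c d h : R) (h1 : b * d * b = b * a * c) (h2 : d * b * d = a * c * d)
    (hac : IsGDrazinInverse (a * c) h) :
    ∀ k : ℕ, 1 ≤ k →
      (b * d) ^ (k + 2) * (b * h ^ 2 * d) - (b * d) ^ (k + 1) =
        b * ((a * c) ^ (k + 1) * h - (a * c) ^ k) * d := by
  obtain ⟨hac1, hcom, -⟩ := hac
  have hach : h * (a * c) = (a * c) * h := hcom _ rfl
  have hdbac : (d * b) * (a * c) = (a * c) * (d * b) := by
    calc d * b * (a * c) = d * (b * a * c) := by noncomm_ring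
      _ = d * (b * d * b) := by rw [h1]
      _ = (d * b * d) * b := by noncomm_ring
      _ = (a * c * d) * b := by rw [h2]
      _ = (a * c) * (d * b) := by noncomm_ring
  have hhdb : h * (d * b) = (d * b) * h := hcom _ hdbac
  have hkey : (a * c) * (h * h) = h := by
    calc (a * c) * (h * h) = ((a * c) * h) * h := by noncomm_ring
      _ = (h * (a * c)) * h := by rw [hach]
      _ = h := hac1.symm
  have hpow : ∀ m : ℕ, (b * d) ^ (m + 2) = b * (a * c) ^ (m + 1) * d := by
    intro m
    induction m with
    | zero =>
      calc (b * d) ^ 2 = (b * d * b) * d := by noncomm_ring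
        _ = (b * a * c) * d := by rw [h1]
        _ = b * (a * c) ^ 1 * d := by noncomm_ring
    | succ n ih =>
      calc (b * d) ^ (n + 3) = (b * d) ^ (n + 2) * (b * d) := by rw [pow_succ]
        _ = (b * (a * c) ^ (n + 1) * d) * (b * d) := by rw [ih]
        _ = b * ((a * c) ^ (n + 1) * (d * b * d)) := by
            simp only [mul_assoc]
        _ = b * ((a * c) ^ (n + 1) * (a * c * d)) := by rw [h2]
        _ = b * (a * c) ^ (n + 2) * d := by
            simp only [pow_succ, mul_assoc]
  intro k hk
  obtain ⟨m, rfl⟩ : ∃ m, k = m + 1 := ⟨k - 1, (Nat.succ_pred_eq_of_pos hk).symm⟩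
  have hhdb2 : h ^ 2 * (d * b) = (d * b) * h ^ 2 := by
    calc h ^ 2 * (d * b) = h * (h * (d * b)) := by rw [sq]; noncomm_ring
      _ = h * ((d * b) * h) := by rw [hhdb]
      _ = (h * (d * b)) * h := by noncomm_ring
      _ = ((d * b) * h) * h := by rw [hhdb]
      _ = (d * b) * h ^ 2 := by rw [sq]; noncomm_ring
  have hach2 : h ^ 2 * (a * c) = (a * c) * h ^ 2 := by
    calc h ^ 2 * (a * c) = h * (h * (a * c)) := by rw [sq]; noncomm_ring
      _ = h * ((a * c) * h) := by rw [hach]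
      _ = (h * (a * c)) * h := by noncomm_ring
      _ = ((a * c) * h) * h := by rw [hach]
      _ = (a * c) * h ^ 2 := by rw [sq]; noncomm_ring
  have main : (b * (a * c) ^ (m + 2) * d) * (b * h ^ 2 * d)
      = b * ((a * c) ^ (m + 2) * h) * d := by
    calc (b * (a * c) ^ (m + 2) * d) * (b * h ^ 2 * d)
        = b * (a * c) ^ (m + 2) * ((d * b) * h ^ 2 * d) := by
          simp only [mul_assoc]
      _ = b * (a * c) ^ (m + 2) * (h ^ 2 * (d * b) * d) := by rw [hhdb2]
      _ = b * (a * c) ^ (m + 2) * (h ^ 2 * (d * b * d)) := by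
          simp only [mul_assoc]
      _ = b * (a * c) ^ (m + 2) * (h ^ 2 * (a * c * d)) := by rw [h2]
      _ = b * ((a * c) ^ (m + 2) * (h ^ 2 * (a * c)) * d) := by
          simp only [mul_assoc]
      _ = b * ((a * c) ^ (m + 2) * ((a * c) * h ^ 2) * d) := by rw [hach2]
      _ = b * ((a * c) ^ (m + 1) * ((a * c) * ((a * c) * (h * h))) * d) := by
          simp only [pow_succ, pow_zero, one_mul, mul_assoc]
      _ = b * ((a * c) ^ (m + 1) * ((a * c) * h) * d) := by rw [hkey]
      _ = b * ((a * c) ^ (m + 2) * h) * d := by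
          simp only [pow_succ, mul_assoc]
  show (b * d) ^ (m + 3) * (b * h ^ 2 * d) - (b * d) ^ (m + 2) = _
  rw [show m + 3 = (m + 1) + 2 from rfl, hpow (m + 1), hpow m, main,
    mul_sub, sub_mul]
end
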